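/- Let H_S be a Hermitian matrix on ℂ^{d_S} with orthonormal eigenbasis {|E_k^S⟩} and eigenvalues E_k^S, and let H_B be a Hermitian matrix on ℂ^{d_B} with orthonormal eigenbasis {|E_q^B⟩} and eigenvalues E_q^B. Let H₀ = H_S ⊗ 1 + 1 ⊗ H_B on ℂ^{d_S} ⊗ ℂ^{d_B}, fix E ∈ ℝ and Δ > 0, and let F be the orthogonal projection onto the span of the product vectors |E_k^S⟩ ⊗ |E_q^B⟩ with E_k^S + E_q^B ∈ [E, E+Δ]; assume F ≠ 0. Then Tr_B(F / rank F) = Σ_{k=1}^{d_S} p_k |E_k^S⟩⟨E_k^S| with p_k = Ω_Δ^B(E − E_k^S) / Σ_{l=1}^{d_S} Ω_Δ^B(E − E_l^S), where Ω_Δ^B(x) denotes the number of indices q (with multiplicity) such that E_q^B ∈ [x, x+Δ]. -/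

import Mathlib

open scoped ComplexOrder

noncomputable section

/-- The trace norm of a complex square matrix: the sum of its singular values,
equal to the trace of `√(Xᴴ X)`. -/
def traceNorm {n : Type*} [Fintype n] [DecidableEq n] (X : Matrix n n ℂ) : ℝ :=
  (((Matrix.posSemidef_conjTranspose_mul_self X).1.eigenvectorUnitary : Matrix n n ℂ) *
    Matrix.diagonal (fun i => ((√((Matrix.posSemidef_conjTranspose_mul_self X).1.eigenvalues i) : ℝ) : ℂ)) *
    (star (Matrix.posSemidef_conjTranspose_mul_self X).1.eigenvectorUnitary : Matrix n n ℂ)).trace.re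

/-- The operator norm (largest singular value) of a complex square matrix. -/
def opNorm {n : Type*} [Fintype n] [DecidableEq n] (X : Matrix n n ℂ) : ℝ :=
  ‖Matrix.toEuclideanCLM (𝕜 := ℂ) X‖
/-- The partial trace over the second (bath) tensor factor. -/
def ptraceB {dS dB : Type*} [Fintype dB] (M : Matrix (dS × dB) (dS × dB) ℂ) :
    Matrix dS dS ℂ :=
  Matrix.of fun i j => ∑ b, M (i, b) (j, b)

/-!
In the product eigenbasis, `F` is the diagonal 0/1 matrix of the energy window, conjugated by
`US ⊗ₖ UB`. The partial trace over the bath commutes with `US ⊗ₖ 1` on either side and is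
invariant under conjugation by the unitary `1 ⊗ₖ UB`, so `Tr_B F = US * diag(n) * USᴴ` with
`n k = #{q | ES k + EB q ∈ [E, E + Δ]} = ΩB (E - ES k)`. The rank of `F` is the number of ones
on the diagonal, `∑ k, n k`.
-/

open Matrix Kronecker

section PartialTrace

variable {m n k l : Type*} [Fintype n]

theorem ptraceB_smul (c : ℂ) (M : Matrix (m × n) (m × n) ℂ) :
    ptraceB (c • M) = c • ptraceB M := by
  ext i j
  simp [ptraceB, Finset.mul_sum]

theorem ptraceB_diagonal [DecidableEq m] [DecidableEq n] (d : m × n → ℂ) :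
    ptraceB (diagonal d) = diagonal fun i => ∑ j, d (i, j) := by
  ext i i'
  by_cases h : i = i' <;> simp [ptraceB, diagonal_apply, h]

theorem ptraceB_kronecker_one_mul_mul [Fintype k] [DecidableEq n] (A : Matrix m k ℂ)
    (M : Matrix (k × n) (k × n) ℂ) (B : Matrix k m ℂ) :
    ptraceB ((A ⊗ₖ (1 : Matrix n n ℂ)) * M * (B ⊗ₖ (1 : Matrix n n ℂ))) = A * ptraceB M * B := by
  ext i j
  simp only [ptraceB, mul_apply, kroneckerMap_apply, one_apply, mul_ite, mul_one, mul_zero, ite_mul,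
    zero_mul, Fintype.sum_prod_type, Finset.sum_ite_eq, Finset.mem_univ, ↓reduceIte, Finset.sum_mul,
    Finset.sum_ite_eq', of_apply, Finset.mul_sum]
  exact Finset.sum_comm.trans (Finset.sum_congr rfl fun _ _ => Finset.sum_comm)

theorem ptraceB_one_kronecker_mul_comm [Fintype m] [Fintype l] [DecidableEq m]
    (V : Matrix n l ℂ) (N : Matrix (m × l) (m × n) ℂ) :
    ptraceB (((1 : Matrix m m ℂ) ⊗ₖ V) * N) = ptraceB (N * ((1 : Matrix m m ℂ) ⊗ₖ V)) := by
  ext i j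
  simp only [ptraceB, mul_apply, kroneckerMap_apply, one_apply, ite_mul, one_mul, zero_mul,
    Fintype.sum_prod_type, Finset.sum_ite_irrel, Finset.sum_const_zero, Finset.sum_ite_eq,
    Finset.mem_univ, ↓reduceIte, of_apply, mul_ite, mul_zero, Finset.sum_ite_eq']
  rw [Finset.sum_comm]
  exact Finset.sum_congr rfl fun _ _ => Finset.sum_congr rfl fun _ _ => mul_comm _ _

theorem ptraceB_kronecker_mul_diagonal_mul_conjTranspose [Fintype m] [Fintype k] [Fintype l]
    [DecidableEq m] [DecidableEq k] [DecidableEq n] [DecidableEq l]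
    (U : Matrix m k ℂ) {V : Matrix n l ℂ} (hV : Vᴴ * V = 1) (d : k × l → ℂ) :
    ptraceB ((U ⊗ₖ V) * diagonal d * (U ⊗ₖ V)ᴴ) = U * diagonal (fun i => ∑ j, d (i, j)) * Uᴴ := by
  have hsplit : U ⊗ₖ V = (U ⊗ₖ (1 : Matrix n n ℂ)) * ((1 : Matrix k k ℂ) ⊗ₖ V) := by
    rw [← mul_kronecker_mul, Matrix.mul_one, Matrix.one_mul]
  have hsplit' : (U ⊗ₖ V)ᴴ = ((1 : Matrix k k ℂ) ⊗ₖ Vᴴ) * (Uᴴ ⊗ₖ (1 : Matrix n n ℂ)) := by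
    rw [conjTranspose_kronecker, ← mul_kronecker_mul, Matrix.mul_one, Matrix.one_mul]
  calc ptraceB ((U ⊗ₖ V) * diagonal d * (U ⊗ₖ V)ᴴ)
      = U * ptraceB (((1 : Matrix k k ℂ) ⊗ₖ V) * (diagonal d * ((1 : Matrix k k ℂ) ⊗ₖ Vᴴ))) * Uᴴ := by
        rw [hsplit', hsplit, ← ptraceB_kronecker_one_mul_mul]
        simp only [Matrix.mul_assoc]
    _ = U * ptraceB (diagonal d) * Uᴴ := by
        rw [ptraceB_one_kronecker_mul_comm, Matrix.mul_assoc (diagonal d), ← mul_kronecker_mul,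
          Matrix.one_mul, hV, one_kronecker_one, Matrix.mul_one]
    _ = U * diagonal (fun i => ∑ j, d (i, j)) * Uᴴ := by rw [ptraceB_diagonal]

end PartialTrace

section Rank

variable {R n : Type*} [Field R] [Fintype n] [DecidableEq n]

theorem rank_mul_mul_star_of_mem_unitary [StarRing R] {U : Matrix n n R}
    (hU : U ∈ unitary (Matrix n n R)) (A : Matrix n n R) : (U * A * star U).rank = A.rank := by
  rw [rank_mul_eq_left_of_isUnit_det _ _
      (isUnit_det_of_right_inverse (Unitary.star_mul_self_of_mem hU)),
    rank_mul_eq_right_of_isUnit_det _ _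
      (isUnit_det_of_right_inverse (Unitary.mul_star_self_of_mem hU))]

theorem rank_diagonal_indicator_one {α : Type*} (s : Set α) (f : n → α) :
    ((diagonal fun i => s.indicator (fun _ => (1 : R)) (f i)).rank : R) =
      ∑ i, s.indicator (fun _ => (1 : R)) (f i) := by
  classical
  simp only [rank_diagonal, Set.indicator_apply, ne_eq, ite_eq_right_iff, one_ne_zero, imp_false,
    not_not, Fintype.card_subtype, Finset.sum_boole]

end Rank

theorem sum_indicator_Icc_add_eq_card {ι : Type*} [Fintype ι] (f : ι → ℝ) (e E Δ : ℝ) :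
    ∑ q, (Set.Icc E (E + Δ)).indicator (fun _ => (1 : ℂ)) (e + f q) =
      Nat.card {q // f q ∈ Set.Icc (E - e) (E - e + Δ)} := by
  rw [Nat.card_eq_fintype_card, Fintype.card_subtype]
  simp only [Set.indicator_apply, Finset.sum_boole]
  congr 2
  ext q
  simp only [Set.mem_Icc, Finset.mem_filter, Finset.mem_univ, true_and]
  constructor <;> rintro ⟨h₁, h₂⟩ <;> constructor <;> linarith

theorem ptraceB_microcanonical_noninteracting_general {dS dB : ℕ}
    (US : Matrix.unitaryGroup (Fin dS) ℂ) (UB : Matrix.unitaryGroup (Fin dB) ℂ)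
    (ES : Fin dS → ℝ) (EB : Fin dB → ℝ)
    (E Δ : ℝ)
    -- the projection onto the span of the product eigenvectors with total
    -- energy in the window `[E, E+Δ]`
    (F : Matrix (Fin dS × Fin dB) (Fin dS × Fin dB) ℂ)
    (hF : F = ((US : Matrix (Fin dS) (Fin dS) ℂ) ⊗ₖ (UB : Matrix (Fin dB) (Fin dB) ℂ))
      * Matrix.diagonal (fun kq : Fin dS × Fin dB =>
          Set.indicator (Set.Icc E (E + Δ)) (fun _ => (1 : ℂ)) (ES kq.1 + EB kq.2))
      * star ((US : Matrix (Fin dS) (Fin dS) ℂ) ⊗ₖ (UB : Matrix (Fin dB) (Fin dB) ℂ)))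
    -- the number of bath levels in the window `[x, x+Δ]`
    (ΩB : ℝ → ℕ) (hΩB : ∀ x, ΩB x = Nat.card {q // EB q ∈ Set.Icc x (x + Δ)}) :
    ptraceB (((F.rank : ℂ))⁻¹ • F) =
      (US : Matrix (Fin dS) (Fin dS) ℂ) *
        Matrix.diagonal (fun k =>
          (((ΩB (E - ES k) : ℝ) / ∑ l, (ΩB (E - ES l) : ℝ) : ℝ) : ℂ)) *
        star (US : Matrix (Fin dS) (Fin dS) ℂ) := by
  set U : Matrix (Fin dS) (Fin dS) ℂ := (US : Matrix (Fin dS) (Fin dS) ℂ)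
  set window := fun kq : Fin dS × Fin dB =>
    (Set.Icc E (E + Δ)).indicator (fun _ => (1 : ℂ)) (ES kq.1 + EB kq.2)
  have hcount : ∀ k, ∑ q, window (k, q) = ΩB (E - ES k) := fun k => by
    rw [hΩB]; exact sum_indicator_Icc_add_eq_card EB (ES k) E Δ
  have hrank : (F.rank : ℂ) = ∑ k, (ΩB (E - ES k) : ℂ) := by
    rw [hF, rank_mul_mul_star_of_mem_unitary (kronecker_mem_unitary US.2 UB.2),
      rank_diagonal_indicator_one, Fintype.sum_prod_type]
    exact Finset.sum_congr rfl fun k _ => hcount k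
  have hpartial : ptraceB F = U * diagonal (fun k => (ΩB (E - ES k) : ℂ)) * star U := by
    rw [hF, star_eq_conjTranspose, ptraceB_kronecker_mul_diagonal_mul_conjTranspose U
      (Unitary.star_mul_self_of_mem UB.2)]
    simp only [hcount, star_eq_conjTranspose]
  rw [ptraceB_smul, hpartial, hrank, ← Matrix.smul_mul, ← Matrix.mul_smul, ← diagonal_smul]
  congr 3
  ext k
  push_cast
  rw [Pi.smul_apply, smul_eq_mul, div_eq_inv_mul]

/-- the reduced state of the (normalized) noninteracting
microcanonical projector is diagonal in the eigenbasis of `H_S`, with weights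
given by the counting of bath states. -/
theorem ptraceB_microcanonical_noninteracting {dS dB : ℕ}
    (HS : Matrix (Fin dS) (Fin dS) ℂ) (HB : Matrix (Fin dB) (Fin dB) ℂ)
    (US : Matrix.unitaryGroup (Fin dS) ℂ) (UB : Matrix.unitaryGroup (Fin dB) ℂ)
    (ES : Fin dS → ℝ) (EB : Fin dB → ℝ)
    -- orthonormal eigenbases of `H_S` and `H_B` (the columns of `US`, `UB`)
    (hHS : HS = (US : Matrix (Fin dS) (Fin dS) ℂ) *
      Matrix.diagonal (fun k => (ES k : ℂ)) * star (US : Matrix (Fin dS) (Fin dS) ℂ))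
    (hHB : HB = (UB : Matrix (Fin dB) (Fin dB) ℂ) *
      Matrix.diagonal (fun q => (EB q : ℂ)) * star (UB : Matrix (Fin dB) (Fin dB) ℂ))
    (H₀ : Matrix (Fin dS × Fin dB) (Fin dS × Fin dB) ℂ)
    (hH₀ : H₀ = HS ⊗ₖ (1 : Matrix (Fin dB) (Fin dB) ℂ)
      + (1 : Matrix (Fin dS) (Fin dS) ℂ) ⊗ₖ HB)
    (E Δ : ℝ) (hΔ : 0 < Δ)
    -- the projection onto the span of the product eigenvectors with total
    -- energy in the window `[E, E+Δ]`
    (F : Matrix (Fin dS × Fin dB) (Fin dS × Fin dB) ℂ)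
    (hF : F = ((US : Matrix (Fin dS) (Fin dS) ℂ) ⊗ₖ (UB : Matrix (Fin dB) (Fin dB) ℂ))
      * Matrix.diagonal (fun kq : Fin dS × Fin dB =>
          Set.indicator (Set.Icc E (E + Δ)) (fun _ => (1 : ℂ)) (ES kq.1 + EB kq.2))
      * star ((US : Matrix (Fin dS) (Fin dS) ℂ) ⊗ₖ (UB : Matrix (Fin dB) (Fin dB) ℂ)))
    (hFne : F ≠ 0)
    -- the number of bath levels in the window `[x, x+Δ]`
    (ΩB : ℝ → ℕ) (hΩB : ∀ x, ΩB x = Nat.card {q // EB q ∈ Set.Icc x (x + Δ)}) :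
    ptraceB (((F.rank : ℂ))⁻¹ • F) =
      (US : Matrix (Fin dS) (Fin dS) ℂ) *
        Matrix.diagonal (fun k =>
          (((ΩB (E - ES k) : ℝ) / ∑ l, (ΩB (E - ES l) : ℝ) : ℝ) : ℂ)) *
        star (US : Matrix (Fin dS) (Fin dS) ℂ) :=
  ptraceB_microcanonical_noninteracting_general US UB ES EB E Δ F hF ΩB hΩB

end
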